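/- Let K ⊆ F be a field extension with K algebraically closed, and let A, B be finite dimensional K-algebras. Then A ⊗_K F ≅ B ⊗_K F as F-algebras if and only if A ≅ B as K-algebras. -/

import Mathlib

/-!
Fix bases of `A` and `B` with structure constants `c` and `d`. A multiplicative linear
isomorphism `R ⊗ A ≃ R ⊗ B` over a commutative `K`-algebra `R` is the same thing as a pair of
matrices `M`, `N` over `R` with `N M = 1`, `M N = 1` and `M` intertwining `c` with `d`: a system
of polynomial equations with coefficients in `K`. An isomorphism over `F` is a zero of this system
in `F`, so the ideal it generates is proper, and by the Nullstellensatz it has a zero in the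
algebraically closed field `K`, i.e. `A ≃ B`. The converse is base change.
-/

open TensorProduct MvPolynomial

namespace Module.Basis

variable {R A ι : Type*} [CommRing R] [NonUnitalNonAssocRing A] [Module R A]

noncomputable def structConst (b : Basis ι R A) (i j l : ι) : R := b.repr (b i * b j) l

theorem mul_eq_sum_structConst [Fintype ι] (b : Basis ι R A) (i j : ι) :
    b i * b j = ∑ l, b.structConst i j l • b l :=
  (b.sum_repr _).symm

theorem structConst_baseChange [SMulCommClass R A A] [IsScalarTower R A A] (S : Type*)
    [CommRing S] [Algebra R S] (b : Basis ι R A) (i j l : ι) :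
    (b.baseChange S).structConst i j l = algebraMap R S (b.structConst i j l) := by
  simp [structConst, Algebra.TensorProduct.tmul_mul_tmul, Algebra.algebraMap_eq_smul_one]

end Module.Basis

section IsoEquations

variable {R S ι κ : Type*} [CommRing R] [CommRing S] [Fintype ι] [DecidableEq ι] [Fintype κ]
  [DecidableEq κ]

/-- `M`, `N` are the matrices of a map `f` and its inverse; the last family says
`f (b i * b j) = f (b i) * f (b j)` in coordinates, `c` and `d` being structure constants. -/
def isoEquations (c : ι → ι → ι → R) (d : κ → κ → κ → R) (M : Matrix κ ι R)
    (N : Matrix ι κ R) : (ι × ι) ⊕ (κ × κ) ⊕ (ι × ι × κ) → R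
  | .inl (i, i') => (N * M - 1 : Matrix ι ι R) i i'
  | .inr (.inl (k, k')) => (M * N - 1 : Matrix κ κ R) k k'
  | .inr (.inr (i, j, k)) => ∑ l, c i j l * M k l - ∑ p, ∑ q, M p i * M q j * d p q k

theorem isoEquations_eq_zero_iff (c : ι → ι → ι → R) (d : κ → κ → κ → R) (M : Matrix κ ι R)
    (N : Matrix ι κ R) :
    isoEquations c d M N = 0 ↔ N * M = 1 ∧ M * N = 1 ∧
      ∀ i j k, ∑ l, c i j l * M k l = ∑ p, ∑ q, M p i * M q j * d p q k := by
  simp only [funext_iff, Sum.forall, Prod.forall, isoEquations, Pi.zero_apply, sub_eq_zero,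
    ← Matrix.ext_iff, Matrix.sub_apply]

theorem map_isoEquations (φ : R →+* S) (c : ι → ι → ι → R) (d : κ → κ → κ → R)
    (M : Matrix κ ι R) (N : Matrix ι κ R) :
    φ ∘ isoEquations c d M N =
      isoEquations (fun i j l => φ (c i j l)) (fun p q k => φ (d p q k)) (M.map φ) (N.map φ) := by
  ext (⟨i, i'⟩ | ⟨k, k'⟩ | ⟨i, j, k⟩) <;>
    simp [isoEquations, Matrix.mul_apply, Matrix.one_apply, apply_ite φ]

end IsoEquations

theorem LinearMap.map_mul_iff_map_mul_basis {R A B ι : Type*} [CommRing R]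
    [NonUnitalNonAssocRing A] [Module R A] [SMulCommClass R A A] [IsScalarTower R A A]
    [NonUnitalNonAssocRing B] [Module R B] [SMulCommClass R B B] [IsScalarTower R B B]
    (α : Module.Basis ι R A) (f : A →ₗ[R] B) :
    (∀ a b, f (a * b) = f a * f b) ↔ ∀ i j, f (α i * α j) = f (α i) * f (α j) := by
  refine ⟨fun h i j => h _ _, fun h => ?_⟩
  have key : (LinearMap.mul R A).compr₂ f = (LinearMap.mul R B).compl₁₂ f f :=
    LinearMap.ext_basis α α h
  exact fun a b => LinearMap.congr_fun₂ key a b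

section Correspondence

variable {R A B ι κ : Type*} [CommRing R] [NonUnitalNonAssocRing A] [Module R A]
  [NonUnitalNonAssocRing B] [Module R B]
  [Fintype ι] [DecidableEq ι] [Fintype κ] [DecidableEq κ]
  (α : Module.Basis ι R A) (β : Module.Basis κ R B)

theorem Matrix.repr_toLin_mul (M : Matrix κ ι R) (i j : ι) (k : κ) :
    β.repr (Matrix.toLin α β M (α i * α j)) k = ∑ l, α.structConst i j l * M k l := by
  simp [α.mul_eq_sum_structConst, map_sum, Finsupp.single_apply]

variable [SMulCommClass R B B] [IsScalarTower R B B]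

theorem Matrix.repr_toLin_mul_toLin (M : Matrix κ ι R) (i j : ι) (k : κ) :
    β.repr (Matrix.toLin α β M (α i) * Matrix.toLin α β M (α j)) k =
      ∑ p, ∑ q, M p i * M q j * β.structConst p q k := by
  simp only [Matrix.toLin_self, Finset.mul_sum, Finset.sum_mul, smul_mul_smul_comm,
    β.mul_eq_sum_structConst, map_sum, map_smul, Module.Basis.repr_self, Finsupp.smul_single,
    smul_eq_mul, mul_one, Finsupp.coe_finsetSum, Finsupp.coe_smul, Finset.sum_apply,
    Pi.smul_apply, Finsupp.single_apply, Finset.sum_ite_eq', Finset.mem_univ, ↓reduceIte,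
    mul_assoc]
  exact Finset.sum_comm

variable [SMulCommClass R A A] [IsScalarTower R A A]

theorem Matrix.toLin_map_mul_iff (M : Matrix κ ι R) :
    (∀ a b, Matrix.toLin α β M (a * b) = Matrix.toLin α β M a * Matrix.toLin α β M b) ↔
      ∀ i j k, ∑ l, α.structConst i j l * M k l =
        ∑ p, ∑ q, M p i * M q j * β.structConst p q k := by
  rw [LinearMap.map_mul_iff_map_mul_basis α]
  simp only [β.ext_elem_iff, Matrix.repr_toLin_mul, Matrix.repr_toLin_mul_toLin]

theorem exists_mulLinearEquiv_iff_isoEquations :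
    (∃ e : A ≃ₗ[R] B, ∀ a b, e (a * b) = e a * e b) ↔
      ∃ M N, isoEquations α.structConst β.structConst M N = 0 := by
  simp only [isoEquations_eq_zero_iff]
  constructor
  · rintro ⟨e, he⟩
    refine ⟨LinearMap.toMatrix α β e, LinearMap.toMatrix β α e.symm, ?_, ?_,
      (Matrix.toLin_map_mul_iff α β _).1 (by simpa using he)⟩
    · rw [← LinearMap.toMatrix_comp, e.symm_comp, LinearMap.toMatrix_id]
    · rw [← LinearMap.toMatrix_comp, e.comp_symm, LinearMap.toMatrix_id]
  · rintro ⟨M, N, hNM, hMN, hmul⟩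
    refine ⟨LinearEquiv.ofLinearMap (Matrix.toLin α β M) (Matrix.toLin β α N) ?_ ?_,
      (Matrix.toLin_map_mul_iff α β M).2 hmul⟩
    · rw [← Matrix.toLin_mul, hMN, Matrix.toLin_one]
    · rw [← Matrix.toLin_mul, hNM, Matrix.toLin_one]

end Correspondence

section Descent

theorem MvPolynomial.exists_aeval_eq_zero_of_aeval_eq_zero {K σ τ : Type*} [Field K]
    [IsAlgClosed K] [Finite σ] (P : τ → MvPolynomial σ K) {R : Type*} [CommRing R] [Nontrivial R]
    [Algebra K R] (x : σ → R) (hx : ∀ t, aeval x (P t) = 0) :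
    ∃ y : σ → K, ∀ t, aeval y (P t) = 0 := by
  have hI : Ideal.span (Set.range P) ≠ ⊤ := by
    refine ne_top_of_le_ne_top (RingHom.ker_ne_top (aeval x).toRingHom) ?_
    rw [Ideal.span_le]
    rintro _ ⟨t, rfl⟩
    exact hx t
  obtain ⟨J, hJ, hIJ⟩ := Ideal.exists_le_maximal _ hI
  obtain ⟨y, rfl⟩ := isMaximal_iff_eq_vanishingIdeal_singleton.1 hJ
  exact ⟨y, fun t => (mem_vanishingIdeal_singleton_iff y _).1 (hIJ (Ideal.subset_span ⟨t, rfl⟩))⟩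

variable {K ι κ : Type*} [Field K] [Fintype ι] [DecidableEq ι] [Fintype κ] [DecidableEq κ]

noncomputable def isoPolynomials (c : ι → ι → ι → K) (d : κ → κ → κ → K) :
    (ι × ι) ⊕ (κ × κ) ⊕ (ι × ι × κ) → MvPolynomial ((κ × ι) ⊕ (ι × κ)) K :=
  isoEquations (fun i j l => C (c i j l)) (fun p q k => C (d p q k))
    (Matrix.of fun k i => X (.inl (k, i))) (Matrix.of fun i k => X (.inr (i, k)))

theorem aeval_comp_isoPolynomials {R : Type*} [CommRing R] [Algebra K R] (c : ι → ι → ι → K)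
    (d : κ → κ → κ → K) (x : (κ × ι) ⊕ (ι × κ) → R) :
    aeval x ∘ isoPolynomials c d =
      isoEquations (fun i j l => algebraMap K R (c i j l)) (fun p q k => algebraMap K R (d p q k))
        (Matrix.of fun k i => x (.inl (k, i))) (Matrix.of fun i k => x (.inr (i, k))) := by
  rw [isoPolynomials, ← AlgHom.coe_toRingHom, map_isoEquations]
  congr 1 <;> ext <;> simp

theorem exists_isoEquations_eq_zero_of_algebraMap [IsAlgClosed K] (c : ι → ι → ι → K)
    (d : κ → κ → κ → K) {R : Type*} [CommRing R] [Nontrivial R] [Algebra K R]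
    (M : Matrix κ ι R) (N : Matrix ι κ R)
    (h : isoEquations (fun i j l => algebraMap K R (c i j l))
      (fun p q k => algebraMap K R (d p q k)) M N = 0) :
    ∃ (M : Matrix κ ι K) (N : Matrix ι κ K), isoEquations c d M N = 0 := by
  have hx : ∀ t, aeval (Sum.elim (fun p => M p.1 p.2) (fun p => N p.1 p.2))
      (isoPolynomials c d t) = 0 := by
    intro t
    rw [← Function.comp_apply (f := aeval _), aeval_comp_isoPolynomials]
    exact congrFun h t
  obtain ⟨y, hy⟩ := exists_aeval_eq_zero_of_aeval_eq_zero _ _ hx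
  refine ⟨Matrix.of fun k i => y (.inl (k, i)), Matrix.of fun i k => y (.inr (i, k)), ?_⟩
  calc _ = aeval y ∘ isoPolynomials c d := by
        simp only [aeval_comp_isoPolynomials, Algebra.algebraMap_self_apply]
    _ = 0 := funext hy

end Descent

theorem stmt12 (K F : Type u) [Field K] [IsAlgClosed K] [Field F] [Algebra K F]
    (A B : Type u)
    [NonUnitalNonAssocRing A] [Module K A] [SMulCommClass K A A] [IsScalarTower K A A]
    [NonUnitalNonAssocRing B] [Module K B] [SMulCommClass K B B] [IsScalarTower K B B]
    [FiniteDimensional K A] [FiniteDimensional K B] :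
    (∃ e : (F ⊗[K] A) ≃ₗ[F] (F ⊗[K] B), ∀ x y, e (x * y) = e x * e y) ↔
      ∃ f : A ≃ₗ[K] B, ∀ x y, f (x * y) = f x * f y := by
  classical
  let 𝒜 := Module.finBasis K A
  let ℬ := Module.finBasis K B
  rw [exists_mulLinearEquiv_iff_isoEquations (𝒜.baseChange F) (ℬ.baseChange F),
    exists_mulLinearEquiv_iff_isoEquations 𝒜 ℬ,
    funext₃ (𝒜.structConst_baseChange F), funext₃ (ℬ.structConst_baseChange F)]
  constructor
  · rintro ⟨M, N, h⟩
    exact exists_isoEquations_eq_zero_of_algebraMap _ _ M N h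
  · rintro ⟨M, N, h⟩
    refine ⟨M.map (algebraMap K F), N.map (algebraMap K F), ?_⟩
    rw [← map_isoEquations, h]
    exact funext fun _ => map_zero _
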